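/- Let σ₁, σ₂ be finite Borel measures of equal total mass on a compact convex set Ω ⊆ ℝⁿ such that ∫ v dσ₁ ≤ ∫ v dσ₂ for every continuous convex v : Ω → ℝ (σ₁ precedes σ₂ in convex order). If T is a Markov kernel on Ω with σ₂ = Tσ₁ and barycenter property ∫ ξ dT_x(ξ) = x for σ₁-a.e. x, and u : Ω → ℝ is a continuous convex function with ∫ u dσ₂ = ∫ u dσ₁, then for σ₁-almost every x the measure T_x is supported on the contact set x̃ = {ξ ∈ Ω : u(ξ) = u(x) + ⟨p, ξ − x⟩} for any subgradient p ∈ ∂u(x). -/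

import Mathlib

open scoped RealInnerProductSpace
open MeasureTheory ProbabilityTheory

/-!
Since `T_x` has barycenter `x`, integrating the supporting affine function `u x + ⟪p x, · - x⟫`
against `T_x` gives `u x`; as it minorizes `u` on `Ω`, the defect `∫ u dT_x - u x` is nonnegative.
Its `σ₁`-integral is `∫ u dσ₂ - ∫ u dσ₁ = 0`, so the defect vanishes `σ₁`-a.e., and wherever it
vanishes the nonnegative gap between `u` and its supporting affine function has zero
`T_x`-integral, i.e. `T_x` lives on the contact set.
-/

namespace MeasureTheory

lemma Measure.integral_comp {α β E : Type*} {_ : MeasurableSpace α} {_ : MeasurableSpace β}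
    [NormedAddCommGroup E] [NormedSpace ℝ E] {μ : Measure α} {κ : Kernel α β} {f : β → E}
    (hf : Integrable f (κ ∘ₘ μ)) :
    ∫ y, f y ∂(κ ∘ₘ μ) = ∫ x, ∫ y, f y ∂κ x ∂μ := by
  rw [Measure.comp_eq_comp_const_apply] at hf ⊢
  rw [Kernel.integral_comp hf, Kernel.const_apply]

lemma Integrable.integral_kernel_of_comp {α β E : Type*} {_ : MeasurableSpace α}
    {_ : MeasurableSpace β} [NormedAddCommGroup E] [NormedSpace ℝ E] {μ : Measure α}
    {κ : Kernel α β} {f : β → E} (hf : Integrable f (κ ∘ₘ μ)) :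
    Integrable (fun x ↦ ∫ y, f y ∂κ x) μ := by
  rw [Measure.comp_eq_comp_const_apply] at hf
  simpa using hf.integral_comp

lemma Continuous.integrable_of_measure_compl_eq_zero {X E : Type*} [TopologicalSpace X]
    [T2Space X] [MeasurableSpace X] [OpensMeasurableSpace X] [NormedAddCommGroup E]
    {f : X → E} (hf : Continuous f) {K : Set X} (hK : IsCompact K) {μ : Measure X}
    [IsFiniteMeasure μ] (hμ : μ Kᶜ = 0) : Integrable f μ := by
  rw [← Measure.restrict_eq_self_of_ae_mem (ae_iff.2 hμ)]
  exact hf.continuousOn.integrableOn_compact hK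

end MeasureTheory

lemma ae_integral_kernel_eq_of_integral_comp_eq {α : Type*} {_ : MeasurableSpace α}
    {μ : Measure α} {κ : Kernel α α} {u : α → ℝ} (hu : Integrable u μ)
    (hu_comp : Integrable u (κ ∘ₘ μ)) (hle : ∀ᵐ x ∂μ, u x ≤ ∫ y, u y ∂κ x)
    (heq : ∫ y, u y ∂(κ ∘ₘ μ) = ∫ x, u x ∂μ) :
    ∀ᵐ x ∂μ, ∫ y, u y ∂κ x = u x := by
  have hdefect_int : Integrable (fun x ↦ ∫ y, u y ∂κ x - u x) μ :=
    hu_comp.integral_kernel_of_comp.sub hu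
  have hdefect_zero : ∫ x, (∫ y, u y ∂κ x - u x) ∂μ = 0 := by
    rw [integral_sub hu_comp.integral_kernel_of_comp hu, ← Measure.integral_comp hu_comp, heq,
      sub_self]
  have hdefect_nonneg : 0 ≤ᵐ[μ] fun x ↦ ∫ y, u y ∂κ x - u x :=
    hle.mono fun x hx ↦ sub_nonneg.2 hx
  filter_upwards [(integral_eq_zero_iff_of_nonneg_ae hdefect_nonneg hdefect_int).1 hdefect_zero]
    with x hx
  exact sub_eq_zero.1 hx

section Barycenter

variable {E : Type*} [NormedAddCommGroup E] [InnerProductSpace ℝ E] [MeasurableSpace E]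
  {μ : Measure E} [IsProbabilityMeasure μ] {x : E}

lemma integrable_const_add_inner_sub (hid : Integrable (fun ξ ↦ ξ) μ) (a : ℝ) (q : E) :
    Integrable (fun ξ ↦ a + ⟪q, ξ - x⟫) μ :=
  (integrable_const a).add ((innerSL ℝ q).integrable_comp (hid.sub (integrable_const x)))

variable [CompleteSpace E]

lemma integral_inner_sub_eq_zero_of_integral_id_eq (hid : Integrable (fun ξ ↦ ξ) μ)
    (hbary : ∫ ξ, ξ ∂μ = x) (q : E) : ∫ ξ, ⟪q, ξ - x⟫ ∂μ = 0 := by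
  have hsub : Integrable (fun ξ ↦ ξ - x) μ := hid.sub (integrable_const x)
  rw [integral_inner hsub, integral_sub hid (integrable_const x), hbary,
    integral_const, probReal_univ, one_smul, sub_self, inner_zero_right]

lemma integral_sub_affine_of_integral_id_eq {u : E → ℝ} (hu : Integrable u μ)
    (hid : Integrable (fun ξ ↦ ξ) μ) (hbary : ∫ ξ, ξ ∂μ = x) (q : E) :
    ∫ ξ, (u ξ - (u x + ⟪q, ξ - x⟫)) ∂μ = ∫ ξ, u ξ ∂μ - u x := by
  have hinner : Integrable (fun ξ ↦ ⟪q, ξ - x⟫) μ := by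
    simpa using integrable_const_add_inner_sub hid 0 q
  rw [integral_sub hu (integrable_const_add_inner_sub hid (u x) q),
    integral_add (integrable_const _) hinner,
    integral_inner_sub_eq_zero_of_integral_id_eq hid hbary, integral_const, probReal_univ,
    one_smul, add_zero]

variable {u : E → ℝ} {q : E} (hu : Integrable u μ) (hid : Integrable (fun ξ ↦ ξ) μ)
  (hbary : ∫ ξ, ξ ∂μ = x) (hq : ∀ᵐ ξ ∂μ, u x + ⟪q, ξ - x⟫ ≤ u ξ)
include hu hid hbary hq

lemma le_integral_of_affine_le : u x ≤ ∫ ξ, u ξ ∂μ := by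
  have hgap_nonneg := integral_nonneg_of_ae (hq.mono fun ξ hξ ↦ sub_nonneg.2 hξ)
  rw [integral_sub_affine_of_integral_id_eq hu hid hbary] at hgap_nonneg
  linarith

lemma ae_eq_affine_of_integral_eq (heq : ∫ ξ, u ξ ∂μ = u x) :
    ∀ᵐ ξ ∂μ, u ξ = u x + ⟪q, ξ - x⟫ := by
  have hgap_zero : ∫ ξ, (u ξ - (u x + ⟪q, ξ - x⟫)) ∂μ = 0 := by
    rw [integral_sub_affine_of_integral_id_eq hu hid hbary, heq, sub_self]
  have hgap_ae := (integral_eq_zero_iff_of_nonneg_ae (hq.mono fun ξ hξ ↦ sub_nonneg.2 hξ)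
    (hu.sub (integrable_const_add_inner_sub hid (u x) q))).1 hgap_zero
  filter_upwards [hgap_ae] with ξ hξ
  exact sub_eq_zero.1 hξ

end Barycenter

theorem stmt8_general {n : ℕ} (Ω : Set (EuclideanSpace ℝ (Fin n)))
    (hΩc : IsCompact Ω)
    (σ₁ σ₂ : Measure (EuclideanSpace ℝ (Fin n)))
    [IsFiniteMeasure σ₁] [IsFiniteMeasure σ₂]
    (hs1 : σ₁ Ωᶜ = 0) (hs2 : σ₂ Ωᶜ = 0)
    (T : EuclideanSpace ℝ (Fin n) → Measure (EuclideanSpace ℝ (Fin n)))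
    (hTprob : ∀ x, IsProbabilityMeasure (T x))
    (hTmeas : ∀ s : Set (EuclideanSpace ℝ (Fin n)), MeasurableSet s →
      Measurable fun x => T x s)
    (hTsupp : ∀ x ∈ Ω, (T x) Ωᶜ = 0)
    (hbind : σ₂ = σ₁.bind T)
    (hbary : ∀ᵐ x ∂σ₁, (∫ ξ, ξ ∂(T x)) = x)
    (u : EuclideanSpace ℝ (Fin n) → ℝ) (hu : Continuous u)
    (heq : (∫ x, u x ∂σ₂) = ∫ x, u x ∂σ₁)
    (p : EuclideanSpace ℝ (Fin n) → EuclideanSpace ℝ (Fin n))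
    (hp : ∀ x ∈ Ω, ∀ ξ ∈ Ω, u x + ⟪p x, ξ - x⟫ ≤ u ξ) :
    ∀ᵐ x ∂σ₁, (T x) {ξ ∈ Ω | u ξ = u x + ⟪p x, ξ - x⟫}ᶜ = 0 := by
  let κ : Kernel _ _ := ⟨T, Measure.measurable_of_measurable_coe T hTmeas⟩
  have hσ₂ : σ₂ = κ ∘ₘ σ₁ := hbind
  have hT_ae_mem (x : _) (hx : x ∈ Ω) : ∀ᵐ ξ ∂T x, ξ ∈ Ω := ae_iff.2 (hTsupp x hx)
  have hTu_int (x : _) (hx : x ∈ Ω) : Integrable u (T x) :=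
    hu.integrable_of_measure_compl_eq_zero hΩc (hTsupp x hx)
  have hTid_int (x : _) (hx : x ∈ Ω) : Integrable (fun ξ ↦ ξ) (T x) :=
    continuous_id.integrable_of_measure_compl_eq_zero hΩc (hTsupp x hx)
  have hsupp_affine (x : _) (hx : x ∈ Ω) : ∀ᵐ ξ ∂T x, u x + ⟪p x, ξ - x⟫ ≤ u ξ :=
    (hT_ae_mem x hx).mono (hp x hx)
  have hfiber : ∀ᵐ x ∂σ₁, ∫ ξ, u ξ ∂T x = u x := by
    refine ae_integral_kernel_eq_of_integral_comp_eq
      (hu.integrable_of_measure_compl_eq_zero hΩc hs1)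
      (hσ₂ ▸ hu.integrable_of_measure_compl_eq_zero hΩc hs2) ?_ (hσ₂ ▸ heq)
    filter_upwards [ae_iff.2 hs1, hbary] with x hx hb
    exact le_integral_of_affine_le (hTu_int x hx) (hTid_int x hx) hb (hsupp_affine x hx)
  filter_upwards [ae_iff.2 hs1, hbary, hfiber] with x hx hb hfx
  have hcontact := ae_eq_affine_of_integral_eq (hTu_int x hx) (hTid_int x hx) hb
    (hsupp_affine x hx) hfx
  exact mem_ae_iff.1 ((hT_ae_mem x hx).and hcontact)

/-- Localization to leaves for sweeping operators: if `σ₁ ⪯ σ₂` in convex order on a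
compact convex `Ω ⊆ ℝⁿ`, `T` is a Markov kernel with barycenter property and
`σ₂ = Tσ₁`, and `u` is a continuous convex function with `∫ u dσ₂ = ∫ u dσ₁`, then
for `σ₁`-a.e. `x` the measure `T_x` is supported on the contact set
`x̃ = {ξ ∈ Ω : u ξ = u x + ⟪p x, ξ − x⟫}` of any subgradient selection `p`. -/
theorem stmt8 {n : ℕ} (Ω : Set (EuclideanSpace ℝ (Fin n)))
    (hΩc : IsCompact Ω) (hΩconv : Convex ℝ Ω)
    (σ₁ σ₂ : Measure (EuclideanSpace ℝ (Fin n)))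
    [IsFiniteMeasure σ₁] [IsFiniteMeasure σ₂]
    (hs1 : σ₁ Ωᶜ = 0) (hs2 : σ₂ Ωᶜ = 0)
    (hmass : σ₁ Set.univ = σ₂ Set.univ)
    (horder : ∀ v : EuclideanSpace ℝ (Fin n) → ℝ, Continuous v → ConvexOn ℝ Ω v →
      (∫ x, v x ∂σ₁) ≤ ∫ x, v x ∂σ₂)
    (T : EuclideanSpace ℝ (Fin n) → Measure (EuclideanSpace ℝ (Fin n)))
    (hTprob : ∀ x, IsProbabilityMeasure (T x))
    (hTmeas : ∀ s : Set (EuclideanSpace ℝ (Fin n)), MeasurableSet s →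
      Measurable fun x => T x s)
    (hTsupp : ∀ x ∈ Ω, (T x) Ωᶜ = 0)
    (hbind : σ₂ = σ₁.bind T)
    (hbary : ∀ᵐ x ∂σ₁, (∫ ξ, ξ ∂(T x)) = x)
    (u : EuclideanSpace ℝ (Fin n) → ℝ) (hu : Continuous u) (huconv : ConvexOn ℝ Ω u)
    (heq : (∫ x, u x ∂σ₂) = ∫ x, u x ∂σ₁)
    (p : EuclideanSpace ℝ (Fin n) → EuclideanSpace ℝ (Fin n))
    (hp : ∀ x ∈ Ω, ∀ ξ ∈ Ω, u x + ⟪p x, ξ - x⟫ ≤ u ξ) :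
    ∀ᵐ x ∂σ₁, (T x) {ξ ∈ Ω | u ξ = u x + ⟪p x, ξ - x⟫}ᶜ = 0 :=
  stmt8_general Ω hΩc σ₁ σ₂ hs1 hs2 T hTprob hTmeas hTsupp hbind hbary u hu heq p hp
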